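/- Every 𝒞*-decomposition of a CRN is incidence independent. -/
import Mathlib


open Finset

/-- The set of complexes of subnetwork `i` (complexes occurring in its reactions). -/
def cplxSet {C R : Type} (src tgt : R → C) {k : ℕ} (part : R → Fin k) (i : Fin k) : Set C :=
  {c | ∃ r, part r = i ∧ (src r = c ∨ tgt r = c)}

/-- The set of common complexes of the decomposition: complexes occurring in at least
two distinct subnetworks. -/
def commonSet {C R : Type} (src tgt : R → C) {k : ℕ} (part : R → Fin k) : Set C :=
  {c | ∃ i j : Fin k, i ≠ j ∧ c ∈ cplxSet src tgt part i ∧ c ∈ cplxSet src tgt part j}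

/-- Underlying (undirected) graph of the reaction network. -/
def parentGraph {C R : Type} (src tgt : R → C) : SimpleGraph C :=
  SimpleGraph.fromRel (fun a b => ∃ r, src r = a ∧ tgt r = b)

/-- Underlying graph of subnetwork `i`. -/
def subGraph {C R : Type} (src tgt : R → C) {k : ℕ} (part : R → Fin k) (i : Fin k) :
    SimpleGraph C :=
  SimpleGraph.fromRel (fun a b => ∃ r, part r = i ∧ src r = a ∧ tgt r = b)

/-- The incidence map `I_a : ℝ^ℛ → ℝ^𝒞`. -/
noncomputable def incid {C R : Type} [Fintype R] [DecidableEq C] (src tgt : R → C) :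
    (R → ℝ) →ₗ[ℝ] (C → ℝ) :=
  ∑ r : R, (LinearMap.toSpanSingleton ℝ (C → ℝ)
      (Pi.single (tgt r) 1 - Pi.single (src r) 1)).comp (LinearMap.proj r)

/-- The incidence map of subnetwork `i`. -/
noncomputable def incidSub {C R : Type} [Fintype R] [DecidableEq C] (src tgt : R → C)
    {k : ℕ} (part : R → Fin k) (i : Fin k) : (R → ℝ) →ₗ[ℝ] (C → ℝ) :=
  ∑ r ∈ Finset.univ.filter (fun r => part r = i),
    (LinearMap.toSpanSingleton ℝ (C → ℝ)
      (Pi.single (tgt r) 1 - Pi.single (src r) 1)).comp (LinearMap.proj r)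

/-- Incidence independence: the image of the incidence map of the parent network is
the (internal) direct sum of the images of the subnetworks' incidence maps. -/
def IncIndep {C R : Type} [Fintype R] [DecidableEq C] (src tgt : R → C)
    {k : ℕ} (part : R → Fin k) : Prop :=
  LinearMap.range (incid src tgt) = (⨆ i : Fin k, LinearMap.range (incidSub src tgt part i)) ∧
  ∀ f : Fin k → (C → ℝ), (∀ i, f i ∈ LinearMap.range (incidSub src tgt part i)) →
    (∑ i, f i) = 0 → ∀ i, f i = 0

/-- Number of linkage classes of subnetwork `i`: connected components of its underlying
graph that meet its complex set. -/
noncomputable def numLCsub {C R : Type} (src tgt : R → C) {k : ℕ} (part : R → Fin k)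
    (i : Fin k) : ℕ :=
  Nat.card {comp : (subGraph src tgt part i).ConnectedComponent //
    ∃ c ∈ cplxSet src tgt part i, (subGraph src tgt part i).connectedComponentMk c = comp}

lemma incid_apply' {C R : Type} [Fintype R] [DecidableEq C] (src tgt : R → C) (v : R → ℝ) :
    incid src tgt v = ∑ r : R, v r • (Pi.single (tgt r) 1 - Pi.single (src r) 1) := by
  simp [incid, LinearMap.toSpanSingleton_apply]

lemma incidSub_apply' {C R : Type} [Fintype R] [DecidableEq C] (src tgt : R → C)
    {k : ℕ} (part : R → Fin k) (i : Fin k) (v : R → ℝ) :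
    incidSub src tgt part i v =
      ∑ r ∈ Finset.univ.filter (fun r => part r = i),
        v r • (Pi.single (tgt r) 1 - Pi.single (src r) 1) := by
  simp [incidSub, LinearMap.toSpanSingleton_apply]

lemma incidSub_support {C R : Type} [Fintype R] [DecidableEq C] (src tgt : R → C)
    {k : ℕ} (part : R → Fin k) (i : Fin k) {x : C → ℝ}
    (hx : x ∈ LinearMap.range (incidSub src tgt part i)) {c : C}
    (hc : c ∉ cplxSet src tgt part i) : x c = 0 := by
  obtain ⟨v, rfl⟩ := hx
  rw [incidSub_apply']
  rw [Finset.sum_apply]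
  refine Finset.sum_eq_zero fun r hr => ?_
  rw [Finset.mem_filter] at hr
  have h1 : src r ≠ c := fun h => hc ⟨r, hr.2, Or.inl h⟩
  have h2 : tgt r ≠ c := fun h => hc ⟨r, hr.2, Or.inr h⟩
  simp [Pi.single_eq_of_ne (Ne.symm h1), Pi.single_eq_of_ne (Ne.symm h2)]

lemma incidSub_sum {C R : Type} [Fintype C] [Fintype R] [DecidableEq C] (src tgt : R → C)
    {k : ℕ} (part : R → Fin k) (i : Fin k) {x : C → ℝ}
    (hx : x ∈ LinearMap.range (incidSub src tgt part i)) : ∑ c, x c = 0 := by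
  obtain ⟨v, rfl⟩ := hx
  rw [incidSub_apply']
  simp_rw [Finset.sum_apply]
  rw [Finset.sum_comm]
  refine Finset.sum_eq_zero fun r _ => ?_
  simp [← Finset.mul_sum, Pi.sub_apply, Finset.sum_sub_distrib, Finset.sum_pi_single']

/-- every 𝒞*-decomposition (the pairwise intersections of the subnetworks'
complex sets contain at most the zero complex `z`) is incidence independent. -/
theorem stmt9 {C R : Type} [Fintype C] [Fintype R] [DecidableEq C]
    (src tgt : R → C)
    (hloop : ∀ r, src r ≠ tgt r)
    (hiso : ∀ c : C, ∃ r, src r = c ∨ tgt r = c)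
    (z : C)  -- the zero complex
    {k : ℕ} (part : R → Fin k)
    (hC : ∀ i j : Fin k, i ≠ j →
      cplxSet src tgt part i ∩ cplxSet src tgt part j ⊆ {z}) :
    IncIndep src tgt part := by
  constructor
  · apply le_antisymm
    · rintro x ⟨v, rfl⟩
      have h : incid src tgt v = ∑ i, incidSub src tgt part i v := by
        rw [incid_apply']
        simp_rw [incidSub_apply']
        exact (Finset.sum_fiberwise Finset.univ part
          (fun r => v r • (Pi.single (tgt r) 1 - Pi.single (src r) 1))).symm
      rw [h]
      exact Submodule.sum_mem _ fun i _ =>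
        (le_iSup (fun i => LinearMap.range (incidSub src tgt part i)) i) ⟨v, rfl⟩
    · refine iSup_le fun i => ?_
      rintro x ⟨v, rfl⟩
      refine ⟨fun r => if part r = i then v r else 0, ?_⟩
      rw [incid_apply', incidSub_apply', Finset.sum_filter]
      simp [ite_smul]
  · intro f hf hsum i
    have key : ∀ j : Fin k, ∀ c : C, c ≠ z → f j c = 0 := by
      intro j c hc
      by_cases hm : c ∈ cplxSet src tgt part j
      · have hzero : ∀ j' : Fin k, j' ≠ j → f j' c = 0 := by
          intro j' hj'
          refine incidSub_support src tgt part j' (hf j') fun hm' => ?_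
          exact hc (hC j' j hj' ⟨hm', hm⟩)
        have hs : ∑ j', f j' c = 0 := by
          have := congrFun hsum c
          simpa [Finset.sum_apply] using this
        rwa [Finset.sum_eq_single j (fun j' _ hj' => hzero j' hj')
          (fun h => absurd (Finset.mem_univ j) h)] at hs
      · exact incidSub_support src tgt part j (hf j) hm
    funext c
    by_cases hcz : c = z
    · subst hcz
      have hs := incidSub_sum src tgt part i (hf i)
      rwa [← Finset.add_sum_erase Finset.univ (f i) (Finset.mem_univ c),
        Finset.sum_eq_zero (fun d hd => key i d (Finset.mem_erase.mp hd).1),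
        add_zero] at hs
    · exact key i c hcz
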